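/- arXiv:2110.15265 — 2 statements merged into one kernel-verified Lean document; each statement's English description precedes it below -/
import Mathlib

section
/- The one-stage scheme SE1-TSI is time-symmetric: if U^{n+1/2} = e^{−h∂_τ/(2ε)}U^n + (h/2)φ₁(−h∂_τ/(2ε)) f_τ(U^{n+1/2}) and U^{n+1} = e^{−h∂_τ/ε}U^n + hφ₁(−h∂_τ/ε) f_τ(U^{n+1/2}), then exchanging U^n ↔ U^{n+1} and h ↔ −h yields an equivalent pair of equations (with the same intermediate value U^{n+1/2}). -/
noncomputable def phi1 (z : ℂ) : ℂ := if z = 0 then 1 else (Complex.exp z - 1) / z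

/-! Both identities reduce, after expressing the unknowns through `b` and `c`, to two
properties of `φ₁`: the reflection `φ₁(-z) = e^{-z} φ₁(z)` and the doubling formula
`φ₁(2w) = (e^w + 1) φ₁(w) / 2`, which is `e^{2w} - 1 = (e^w + 1)(e^w - 1)` divided by `2w`.
With `z = 2w` everything is then a rational identity in `e^w` and `φ₁(w)`. -/

open Complex

lemma phi1_neg (z : ℂ) : phi1 (-z) = exp (-z) * phi1 z := by
  rcases eq_or_ne z 0 with rfl | hz
  · simp [phi1]
  · simp only [phi1, neg_eq_zero, if_neg hz, exp_neg]
    field_simp [exp_ne_zero z]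
    ring

lemma phi1_two_mul (w : ℂ) : phi1 (2 * w) = (exp w + 1) / 2 * phi1 w := by
  rcases eq_or_ne w 0 with rfl | hw
  · simp [phi1]
  · simp only [phi1, mul_eq_zero, two_ne_zero, false_or, if_neg hw]
    rw [two_mul, exp_add]
    field_simp
    ring

/-- Time symmetry of the SE1-TSI scheme on a single Fourier mode with symbol `z`. -/
theorem SE1TSI_time_symmetric (z h a b c d : ℂ)
    (h1 : a = Complex.exp (-z / 2) * b + (h / 2) * phi1 (-z / 2) * c)
    (h2 : d = Complex.exp (-z) * b + h * phi1 (-z) * c) :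
    a = Complex.exp (z / 2) * d - (h / 2) * phi1 (z / 2) * c ∧
      b = Complex.exp z * d - h * phi1 z * c := by
  obtain ⟨w, rfl⟩ : ∃ w, z = 2 * w := ⟨z / 2, by ring⟩
  have hhalf : 2 * w / 2 = w := by ring
  have hneg_half : -(2 * w) / 2 = -w := by ring
  subst h1 h2
  simp only [hhalf, hneg_half, phi1_neg, phi1_two_mul, exp_neg]
  simp only [two_mul, exp_add]
  have hexp_ne : exp w ≠ 0 := exp_ne_zero w
  constructor <;> field_simp <;> ring
end

section
/- The average-vector-field scheme SE2-TSI, U^{n+1} = e^{−h∂_τ/ε}U^n + hφ₁(−h∂_τ/ε)∫₀¹ f((1−ρ)U^n + ρU^{n+1})dρ, is time-symmetric: replacing (U^n, U^{n+1}, h) by (U^{n+1}, U^n, −h) gives an equivalent equation. -/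
/-! Two facts make the scheme symmetric: the reflection `ρ ↦ 1 - ρ` turns the average of `f`
along the segment from `B` to `A` into the average along the segment from `A` to `B`, and
`e^z φ₁(-z) = φ₁(z)`. Multiplying the forward step by `e^z` therefore gives the backward one. -/

theorem exp_mul_exp_neg (z : ℂ) : Complex.exp z * Complex.exp (-z) = 1 := by
  rw [← Complex.exp_add, add_neg_cancel, Complex.exp_zero]

theorem exp_mul_phi1_neg (z : ℂ) : Complex.exp z * phi1 (-z) = phi1 z := by
  by_cases hz : z = 0
  · simp [phi1, hz]
  · rw [phi1, phi1, if_neg (neg_ne_zero.mpr hz), if_neg hz]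
    field_simp
    linear_combination -exp_mul_exp_neg z

theorem integral_comp_segment_symm {E : Type*} [NormedAddCommGroup E] [NormedSpace ℝ E]
    (g : ℂ → E) (A B : ℂ) :
    ∫ ρ in (0:ℝ)..1, g ((1 - ρ) * B + ρ * A) = ∫ ρ in (0:ℝ)..1, g ((1 - ρ) * A + ρ * B) := by
  have hreflect := intervalIntegral.integral_comp_sub_left
    (fun ρ : ℝ => g ((1 - (ρ : ℂ)) * A + ρ * B)) (a := 0) (b := 1) 1
  rw [sub_zero, sub_self] at hreflect
  rw [← hreflect]
  congr 1 with ρ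
  push_cast
  ring_nf

theorem eq_mul_add_iff_eq_mul_sub {R : Type*} [CommRing R] {u v : R} (huv : u * v = 1)
    (A B p : R) : B = v * A + p ↔ A = u * B - u * p := by
  constructor
  · rintro rfl
    linear_combination -A * huv
  · rintro rfl
    linear_combination (-B + p) * huv

theorem SE2TSI_time_symmetric_general (z : ℂ) (h : ℂ) (f : ℂ → ℂ)
    (A B : ℂ) :
    B = Complex.exp (-z) * A +
        h * phi1 (-z) * ∫ ρ in (0:ℝ)..1, f ((1 - ρ) * A + ρ * B) ↔
      A = Complex.exp z * B -
        h * phi1 z * ∫ ρ in (0:ℝ)..1, f ((1 - ρ) * B + ρ * A) := by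
  rw [integral_comp_segment_symm, ← exp_mul_phi1_neg z]
  convert eq_mul_add_iff_eq_mul_sub (exp_mul_exp_neg z) A B _ using 3
  ring

/-- Time symmetry of the SE2-TSI (average-vector-field) scheme on a single Fourier
mode with purely imaginary symbol `z`. -/
theorem SE2TSI_time_symmetric (z : ℂ) (hz : z.re = 0) (h : ℂ) (f : ℂ → ℂ)
    (hf : Continuous f) (A B : ℂ) :
    B = Complex.exp (-z) * A +
        h * phi1 (-z) * ∫ ρ in (0:ℝ)..1, f ((1 - ρ) * A + ρ * B) ↔
      A = Complex.exp z * B -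
        h * phi1 z * ∫ ρ in (0:ℝ)..1, f ((1 - ρ) * B + ρ * A) :=
  SE2TSI_time_symmetric_general z h f A B
end
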